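/- arXiv:2205.07764 — 2 statements merged into one kernel-verified Lean document; each statement's English description precedes it below -/
import Mathlib

section
/- For the function f_0(x) = (M - |x|_1)_+ on ℝ^d, where |x|_1 = Σ|x_i| and M > 0, the squared L² norm equals 2^(d+1) M^(d+2) / (d+2)!. -/
/-!
Fubini peels off one coordinate: the integral of `(M - |x|₁)₊ ^ k` over `ℝ^(d+1)` is the integral
over `t ∈ ℝ` of the same integral over `ℝ^d` with `M` replaced by `M - |t|`. Induction on `d`, with
the exponent `k` left free, then reduces everything to the one-variable integral
`∫ (M - |t|)₊ ^ k dt = 2 M₊ ^ (k + 1) / (k + 1)` and gives `2 ^ d k! M₊ ^ (k + d) / (k + d)!`.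
-/

open MeasureTheory Set

theorem integral_max_sub_abs_pow {k : ℕ} (hk : k ≠ 0) (M : ℝ) :
    ∫ t : ℝ, max (M - |t|) 0 ^ k = 2 * max M 0 ^ (k + 1) / (k + 1) := by
  rcases le_total M 0 with hM | hM
  · have hzero : ∀ t : ℝ, max (M - |t|) 0 = 0 := fun t ↦ max_eq_right (by linarith [abs_nonneg t])
    simp [hzero, hM, hk]
  have hvanish : ∀ u ∈ Ioi (0 : ℝ) \ Ioc 0 M, max (M - u) 0 ^ k = 0 := fun u hu ↦ by
    simp only [mem_sdiff, mem_Ioi, mem_Ioc, not_and, not_le] at hu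
    simp [max_eq_right (by linarith [hu.2 hu.1] : M - u ≤ 0), hk]
  have hinterval : ∫ u in (0)..M, max (M - u) 0 ^ k = ∫ u in (0)..M, (M - u) ^ k :=
    intervalIntegral.integral_congr fun u hu ↦ by
      rw [uIcc_of_le hM] at hu
      rw [max_eq_left (by linarith [hu.2])]
  rw [integral_comp_abs (f := fun u ↦ max (M - u) 0 ^ k),
    setIntegral_eq_of_subset_of_forall_sdiff_eq_zero measurableSet_Ioi Ioc_subset_Ioi_self hvanish,
    ← intervalIntegral.integral_of_le hM, hinterval, intervalIntegral.integral_comp_sub_left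
    (fun u ↦ u ^ k), integral_pow, max_eq_left hM, sub_zero, sub_self, zero_pow k.succ_ne_zero,
    sub_zero, mul_div_assoc]

theorem hasCompactSupport_max_sub_sum_abs {ι : Type*} [Fintype ι] (M : ℝ) :
    HasCompactSupport fun x : ι → ℝ ↦ max (M - ∑ i, |x i|) 0 := by
  refine HasCompactSupport.intro (isCompact_closedBall 0 |M|) fun x hx ↦ max_eq_right ?_
  obtain ⟨i, hi⟩ : ∃ i, |M| < |x i| := by
    simpa [Metric.mem_closedBall, dist_zero_right, pi_norm_le_iff_of_nonneg (abs_nonneg M),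
      Real.norm_eq_abs] using hx
  have hxi : |x i| ≤ ∑ j, |x j| :=
    Finset.single_le_sum (fun j _ ↦ abs_nonneg (x j)) (Finset.mem_univ i)
  linarith [le_abs_self M]

theorem integrable_max_sub_sum_abs_pow {ι : Type*} [Fintype ι] {k : ℕ} (hk : k ≠ 0) (M : ℝ) :
    Integrable fun x : ι → ℝ ↦ max (M - ∑ i, |x i|) 0 ^ k := by
  have hcont : Continuous fun x : ι → ℝ ↦ max (M - ∑ i, |x i|) 0 ^ k := by fun_prop
  exact hcont.integrable_of_hasCompactSupport
    ((hasCompactSupport_max_sub_sum_abs M).comp_left (g := (· ^ k)) (zero_pow hk))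

theorem integral_fin_succ_eq_integral_integral_cons {E : Type*} [NormedAddCommGroup E]
    [NormedSpace ℝ E] {n : ℕ} {g : (Fin (n + 1) → ℝ) → E} (hg : Integrable g) :
    ∫ x, g x = ∫ t, ∫ y, g (Fin.cons t y) := by
  have hmp := (volume_preserving_piFinSuccAbove (fun _ : Fin (n + 1) ↦ ℝ) 0).symm
  rw [← hmp.integral_comp', Measure.volume_eq_prod, integral_prod]
  · simp [MeasurableEquiv.piFinSuccAbove_symm_apply, Fin.insertNthEquiv]
  · rw [← Measure.volume_eq_prod]
    exact (hmp.integrable_comp_emb (MeasurableEquiv.measurableEmbedding _)).mpr hg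

theorem integral_max_sub_sum_abs_pow {k : ℕ} (hk : k ≠ 0) (d : ℕ) (M : ℝ) :
    ∫ x : Fin d → ℝ, max (M - ∑ i, |x i|) 0 ^ k =
      2 ^ d * k.factorial * max M 0 ^ (k + d) / (k + d).factorial := by
  induction d generalizing M with
  | zero =>
    simp [measureReal_def, volume_pi, Nat.factorial_ne_zero]
  | succ n ih =>
    rw [integral_fin_succ_eq_integral_integral_cons (integrable_max_sub_sum_abs_pow hk M)]
    simp only [Fin.sum_univ_succ, Fin.cons_zero, Fin.cons_succ, ← sub_sub, ih]
    rw [integral_div, integral_const_mul, integral_max_sub_abs_pow (by omega),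
      show k + (n + 1) = k + n + 1 by ring, Nat.factorial_succ]
    push_cast
    field_simp
    ring

theorem stmt_0_general (d : ℕ) (M : ℝ) (hM : 0 < M) :
    ∫ x : Fin d → ℝ, (max (M - ∑ i, |x i|) 0) ^ 2 =
      2 ^ (d + 1) * M ^ (d + 2) / (Nat.factorial (d + 2)) := by
  rw [integral_max_sub_sum_abs_pow two_ne_zero, max_eq_left hM.le, add_comm 2 d]
  simp only [Nat.factorial_two, Nat.cast_ofNat]
  ring

/-- The squared L² norm of `f₀(x) = (M - |x|₁)₊` on `ℝ^d` equals `2^(d+1) M^(d+2) / (d+2)!`. -/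
theorem stmt_0 (d : ℕ) (hd : 1 ≤ d) (M : ℝ) (hM : 0 < M) :
    ∫ x : Fin d → ℝ, (max (M - ∑ i, |x i|) 0) ^ 2 =
      2 ^ (d + 1) * M ^ (d + 2) / (Nat.factorial (d + 2)) :=
  stmt_0_general d M hM
end

section
/- In the model y = θ + σw, w ~ N(0, I_m), σ > 0, for any matrix A ∈ ℝ^{m×m} with diagonal entries a_{jj}, letting ā = sqrt((1/m)Σ_j a_{jj}²), the homogeneous diagonal estimator θ̂ = ā y satisfies max_{θ ∈ Θ_m} E_θ |ā y - θ|² ≤ max_{θ ∈ Θ_m} E_θ |A y - θ|², where Θ_m = {e_1,…,e_m}. -/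
/-!
The risk of `θ̂ = B y` at `θ` is `‖(B - 1) θ‖² + σ² ‖B‖_F²`. At `θ = e_j` the risk of `ā y` is
`(ā - 1)² + m σ² ā²` for every `j`, whereas the risks of `A y` sum over `j` to
`‖A - 1‖_F² + m σ² ‖A‖_F²`. Keeping only the diagonal entries of both Frobenius norms, and using
`∑ a_jj ≤ m ā` (Cauchy–Schwarz), this sum is at least `m` times the risk of `ā y`, so some `j`
has risk at least that of `ā y`.
-/

open MeasureTheory ProbabilityTheory Matrix

variable {ι : Type*} [Fintype ι] {γ : Measure ℝ} [IsProbabilityMeasure γ]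

lemma memLp_const_add_sum_mul_eval (hγ : MemLp id 2 γ) (c : ℝ) (b : ι → ℝ) :
    MemLp (fun w : ι → ℝ => c + ∑ k, b k * w k) 2 (Measure.pi fun _ => γ) :=
  (memLp_const c).add <| memLp_finsetSum _ fun k _ =>
    (hγ.const_mul (b k)).comp_measurePreserving (measurePreserving_eval _ k)

lemma integral_sq_const_add_sum_mul_eval (hγ : MemLp id 2 γ) (c : ℝ) (b : ι → ℝ) :
    ∫ w : ι → ℝ, (c + ∑ k, b k * w k) ^ 2 ∂Measure.pi (fun _ => γ)
      = (c + (∑ k, b k) * ∫ x, x ∂γ) ^ 2 + (∑ k, b k ^ 2) * Var[id; γ] := by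
  have hcoord (k : ι) : MemLp (fun w : ι → ℝ => b k * w k) 2 (Measure.pi fun _ => γ) :=
    (hγ.const_mul (b k)).comp_measurePreserving (measurePreserving_eval _ k)
  have hsum : MemLp (fun w : ι → ℝ => ∑ k, b k * w k) 2 (Measure.pi fun _ => γ) :=
    memLp_finsetSum _ fun k _ => hcoord k
  have hmean : ∫ w, c + ∑ k, b k * w k ∂Measure.pi (fun _ => γ)
      = c + (∑ k, b k) * ∫ x, x ∂γ := by
    rw [integral_add (integrable_const c) (hsum.integrable one_le_two),
      integral_finsetSum _ fun k _ => (hcoord k).integrable one_le_two, Finset.sum_mul]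
    simp [integral_const_mul, integral_eval]
  have hvar : Var[fun w : ι → ℝ => c + ∑ k, b k * w k; Measure.pi fun _ => γ]
      = (∑ k, b k ^ 2) * Var[id; γ] := by
    rw [variance_const_add hsum.aestronglyMeasurable]
    have := variance_sum_pi (μ := fun _ : ι => γ) (X := fun k x => b k * x)
      fun k => hγ.const_mul (b k)
    simp only [Finset.sum_fn] at this
    rw [this, Finset.sum_mul]
    exact Finset.sum_congr rfl fun k _ => variance_const_mul _ _ _
  have hvar_eq := variance_eq_sub (memLp_const_add_sum_mul_eval hγ c b)
  simp only [Pi.pow_apply, hvar, hmean] at hvar_eq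
  linarith

/-- The mean squared error of `θ̂ = B y` at `θ`, when `y = θ + ξ` with noise covariance `s • 1`. -/
def linearRisk (s : ℝ) (B : Matrix ι ι ℝ) (θ : ι → ℝ) : ℝ :=
  ∑ i, ((B *ᵥ θ) i - θ i) ^ 2 + s * ∑ i, ∑ k, B i k ^ 2

lemma integral_sum_sq_mulVec_sub_eq_linearRisk (hγ : MemLp id 2 γ) (hmean : ∫ x, x ∂γ = 0)
    (B : Matrix ι ι ℝ) (θ : ι → ℝ) (σ : ℝ) :
    ∫ w : ι → ℝ, ∑ i, ((B *ᵥ fun k => θ k + σ * w k) i - θ i) ^ 2 ∂Measure.pi (fun _ => γ)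
      = linearRisk (σ ^ 2 * Var[id; γ]) B θ := by
  have hsplit (w : ι → ℝ) (i : ι) : (B *ᵥ fun k => θ k + σ * w k) i - θ i
      = ((B *ᵥ θ) i - θ i) + ∑ k, σ * B i k * w k := by
    simp only [mulVec, dotProduct, mul_add, Finset.sum_add_distrib]
    rw [add_sub_right_comm]
    exact congrArg _ (Finset.sum_congr rfl fun k _ => by ring)
  simp_rw [hsplit]
  rw [integral_finsetSum _ fun i _ => (memLp_const_add_sum_mul_eval hγ _ _).integrable_sq]
  simp_rw [integral_sq_const_add_sum_mul_eval hγ, hmean]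
  simp only [linearRisk, mul_zero, add_zero, mul_pow, ← Finset.mul_sum]
  rw [Finset.sum_add_distrib, ← Finset.sum_mul, ← Finset.mul_sum]
  ring

noncomputable def rootMeanSquare (d : ι → ℝ) : ℝ := √((1 / Fintype.card ι) * ∑ j, d j ^ 2)

lemma card_mul_rootMeanSquare_sq (d : ι → ℝ) :
    Fintype.card ι * rootMeanSquare d ^ 2 = ∑ j, d j ^ 2 := by
  rcases isEmpty_or_nonempty ι with hι | hι
  · simp
  rw [rootMeanSquare, Real.sq_sqrt (by positivity)]
  field_simp

lemma sum_le_card_mul_rootMeanSquare (d : ι → ℝ) :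
    ∑ j, d j ≤ Fintype.card ι * rootMeanSquare d := by
  have hcs := sq_sum_le_card_mul_sum_sq (s := Finset.univ) (f := d)
  rw [← card_mul_rootMeanSquare_sq, Finset.card_univ] at hcs
  have hnonneg : 0 ≤ (Fintype.card ι : ℝ) * rootMeanSquare d :=
    mul_nonneg (Nat.cast_nonneg _) (Real.sqrt_nonneg _)
  exact (abs_le_of_sq_le_sq' (by linarith) hnonneg).2

lemma card_mul_sq_rootMeanSquare_sub_one_le (d : ι → ℝ) :
    Fintype.card ι * (rootMeanSquare d - 1) ^ 2 ≤ ∑ j, (d j - 1) ^ 2 := by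
  have hsq := card_mul_rootMeanSquare_sq d
  have hsum := sum_le_card_mul_rootMeanSquare d
  simp only [sub_sq, Finset.sum_add_distrib, Finset.sum_sub_distrib,
    Finset.sum_const, Finset.card_univ, nsmul_eq_mul, ← Finset.mul_sum, mul_one, one_pow]
  nlinarith

lemma sum_sq_diag_le_sum_sq (M : Matrix ι ι ℝ) : ∑ j, M j j ^ 2 ≤ ∑ i, ∑ k, M i k ^ 2 :=
  Finset.sum_le_sum fun i _ =>
    Finset.single_le_sum (f := fun k => M i k ^ 2) (fun _ _ => sq_nonneg _) (Finset.mem_univ i)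

variable [DecidableEq ι]

lemma linearRisk_smul_one_single (s a : ℝ) (j : ι) :
    linearRisk s (a • 1) (Pi.single j 1) = (a - 1) ^ 2 + s * (Fintype.card ι * a ^ 2) := by
  simp [linearRisk, Pi.single_apply, one_apply, ite_sub_ite]

lemma sum_linearRisk_single (s : ℝ) (A : Matrix ι ι ℝ) :
    ∑ j, linearRisk s A (Pi.single j 1)
      = ∑ i, ∑ j, (A - 1) i j ^ 2 + Fintype.card ι * (s * ∑ i, ∑ k, A i k ^ 2) := by
  simp only [linearRisk, mulVec_single_one, Finset.sum_add_distrib, Finset.sum_const,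
    Finset.card_univ, nsmul_eq_mul]
  rw [Finset.sum_comm]
  simp only [col_apply, Pi.single_apply, Matrix.sub_apply, one_apply]

lemma card_mul_linearRisk_smul_one_le_sum (s : ℝ) (hs : 0 ≤ s) (A : Matrix ι ι ℝ) (j : ι) :
    Fintype.card ι * linearRisk s (rootMeanSquare (fun i => A i i) • 1) (Pi.single j 1)
      ≤ ∑ k, linearRisk s A (Pi.single k 1) := by
  have hdiag : ∑ i, (A i i - 1) ^ 2 ≤ ∑ i, ∑ j, (A - 1) i j ^ 2 := by
    have := sum_sq_diag_le_sum_sq (A - 1)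
    simp only [Matrix.sub_apply, one_apply_eq] at this
    exact this
  rw [linearRisk_smul_one_single, sum_linearRisk_single, mul_add]
  gcongr
  · exact (card_mul_sq_rootMeanSquare_sub_one_le _).trans hdiag
  · exact (card_mul_rootMeanSquare_sq _).trans_le (sum_sq_diag_le_sum_sq A)

lemma iSup_linearRisk_rootMeanSquare_smul_one_le [Nonempty ι] (s : ℝ) (hs : 0 ≤ s)
    (A : Matrix ι ι ℝ) :
    ⨆ j : ι, linearRisk s (rootMeanSquare (fun i => A i i) • 1) (Pi.single j 1)
      ≤ ⨆ j : ι, linearRisk s A (Pi.single j 1) := by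
  set j₀ := Classical.arbitrary ι
  have hconst (j : ι) : linearRisk s (rootMeanSquare (fun i => A i i) • 1) (Pi.single j 1)
      = linearRisk s (rootMeanSquare (fun i => A i i) • 1) (Pi.single j₀ 1) := by
    simp only [linearRisk_smul_one_single]
  rw [iSup_congr hconst, ciSup_const]
  refine le_of_mul_le_mul_left ((card_mul_linearRisk_smul_one_le_sum s hs A j₀).trans ?_)
    (Nat.cast_pos.2 Fintype.card_pos)
  have := Finset.sum_le_card_nsmul Finset.univ _ _ fun j _ =>
    le_ciSup (f := fun j : ι => linearRisk s A (Pi.single j 1)) (Set.finite_range _).bddAbove j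
  rwa [Finset.card_univ, nsmul_eq_mul] at this

theorem stmt_6_general (m : ℕ) (σ : ℝ)
    (A : Matrix (Fin m) (Fin m) ℝ)
    (abar : ℝ) (habar : abar = Real.sqrt ((1 / m) * ∑ j, (A j j) ^ 2))
    (e : Fin m → Fin m → ℝ) (he : ∀ j i, e j i = if i = j then 1 else 0) :
    (⨆ j : Fin m,
      ∫ w : Fin m → ℝ,
        (∑ i, (abar * (e j i + σ * w i) - e j i) ^ 2)
        ∂(Measure.pi fun _ : Fin m => gaussianReal 0 1)) ≤
    ⨆ j : Fin m,
      ∫ w : Fin m → ℝ,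
        (∑ i, (A.mulVec (fun i' => e j i' + σ * w i') i - e j i) ^ 2)
        ∂(Measure.pi fun _ : Fin m => gaussianReal 0 1) := by
  rcases isEmpty_or_nonempty (Fin m) with hm | hm
  · simp [Real.iSup_of_isEmpty]
  obtain rfl : e = fun j => Pi.single j 1 := by
    funext j i
    simp [he, Pi.single_apply]
  beta_reduce
  have habar' : abar = rootMeanSquare fun i => A i i := by
    rw [habar, rootMeanSquare, Fintype.card_fin]
  have hrisk (B : Matrix (Fin m) (Fin m) ℝ) (j : Fin m) :=
    integral_sum_sq_mulVec_sub_eq_linearRisk (γ := gaussianReal 0 1) (memLp_id_gaussianReal 2)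
      integral_id_gaussianReal B (Pi.single j 1) σ
  simp only [variance_id_gaussianReal, NNReal.coe_one, mul_one] at hrisk
  have hdiag (j : Fin m) (w : Fin m → ℝ) (i : Fin m) :
      abar * ((Pi.single j 1 : Fin m → ℝ) i + σ * w i)
        = ((abar • 1 : Matrix (Fin m) (Fin m) ℝ) *ᵥ
            fun k => (Pi.single j 1 : Fin m → ℝ) k + σ * w k) i := by
    simp only [smul_mulVec, one_mulVec, Pi.smul_apply, smul_eq_mul]
  simp_rw [hdiag, hrisk, habar']
  exact iSup_linearRisk_rootMeanSquare_smul_one_le _ (sq_nonneg σ) A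

/-- In the one-sparse Gaussian sequence model, any linear estimator `θ̂ = A y` is
dominated in maximal risk over `Θ_m = {e_1,…,e_m}` by the homogeneous diagonal
estimator `θ̂ = ā y` with `ā = √((1/m) Σ_j a_{jj}²)`. -/
theorem stmt_6 (m : ℕ) (hm : 1 ≤ m) (σ : ℝ) (hσ : 0 < σ)
    (A : Matrix (Fin m) (Fin m) ℝ)
    (abar : ℝ) (habar : abar = Real.sqrt ((1 / m) * ∑ j, (A j j) ^ 2))
    (e : Fin m → Fin m → ℝ) (he : ∀ j i, e j i = if i = j then 1 else 0) :
    (⨆ j : Fin m,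
      ∫ w : Fin m → ℝ,
        (∑ i, (abar * (e j i + σ * w i) - e j i) ^ 2)
        ∂(Measure.pi fun _ : Fin m => gaussianReal 0 1)) ≤
    ⨆ j : Fin m,
      ∫ w : Fin m → ℝ,
        (∑ i, (A.mulVec (fun i' => e j i' + σ * w i') i - e j i) ^ 2)
        ∂(Measure.pi fun _ : Fin m => gaussianReal 0 1) :=
  stmt_6_general m σ A abar habar e he
end
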